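/- arXiv:1807.10210 — 2 statements merged into one kernel-verified Lean document; each statement's English description precedes it below -/
import Mathlib

section
/- Every p-dominion in a parity game contains at least one p-tangle: if D is a p-dominion for player α = p mod 2, then there exist U ⊆ D and a strategy σ' such that (U, σ') is a p-tangle. -/
open scoped Classical

/-- A parity game on a finite vertex type `V`.  Player `false` is Even and
player `true` is Odd; `owner v` is the player controlling vertex `v`,
`edge` is the (left-total) move relation and `pr` assigns priorities. -/
structure ParityGame (V : Type) [Fintype V] where
  owner : V → Bool
  edge : V → V → Prop
  total : ∀ v, ∃ w, edge v w
  pr : V → ℕ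

namespace ParityGame

variable {V : Type} [Fintype V] (G : ParityGame V)

/-- The player whose parity matches the priority `p` (`false` = Even, `true` = Odd). -/
def playerOf (p : ℕ) : Bool := decide (p % 2 = 1)

/-- A play is an infinite sequence of vertices consistent with the edge relation. -/
def IsPlay (π : ℕ → V) : Prop := ∀ i, G.edge (π i) (π (i + 1))

/-- The set of vertices occurring infinitely often in `π`. -/
def infOcc (π : ℕ → V) : Set V := {v | ∀ n : ℕ, ∃ m, n ≤ m ∧ π m = v}

/-- The highest priority of a vertex in `S`. -/
noncomputable def maxPr (S : Set V) : ℕ := sSup (G.pr '' S)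

/-- Player `α` wins the play `π` iff the highest priority occurring infinitely
often in `π` has `α`'s parity. -/
def Wins (α : Bool) (π : ℕ → V) : Prop := playerOf (G.maxPr (infOcc π)) = α

/-- A (positional, partial) strategy for player `α`. -/
def IsStrategy (α : Bool) (σ : V → Option V) : Prop :=
  ∀ v w, σ v = some w → G.owner v = α ∧ G.edge v w

/-- A play is consistent with the strategy `σ`. -/
def Consistent (σ : V → Option V) (π : ℕ → V) : Prop :=
  ∀ i w, σ (π i) = some w → π (i + 1) = w

/-- All plays starting in `U` that are consistent with `σ`. -/
def PlaysFrom (U : Set V) (σ : V → Option V) : Set (ℕ → V) :=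
  {π | G.IsPlay π ∧ π 0 ∈ U ∧ Consistent σ π}

/-- `U` is closed with respect to player `α`: every `α`-vertex of `U` has a
successor in `U` and every opponent vertex of `U` has all successors in `U`. -/
def ClosedFor (α : Bool) (U : Set V) : Prop :=
  (∀ v ∈ U, G.owner v = α → ∃ w ∈ U, G.edge v w) ∧
  (∀ v ∈ U, G.owner v ≠ α → ∀ w, G.edge v w → w ∈ U)

/-- `D` is an `α`-dominion with (winning) strategy `σ`: `D` is closed for `α`,
`σ` is a strategy of `α` defined on all `α`-vertices of `D` with values in `D`,
and `α` wins every consistent play from `D`. -/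
def IsDominionWith (α : Bool) (D : Set V) (σ : V → Option V) : Prop :=
  G.ClosedFor α D ∧ G.IsStrategy α σ ∧
  (∀ v ∈ D, G.owner v = α → ∃ w ∈ D, σ v = some w) ∧
  ∀ π ∈ G.PlaysFrom D σ, G.Wins α π

/-- `D` is an `α`-dominion. -/
def IsDominion (α : Bool) (D : Set V) : Prop := ∃ σ, G.IsDominionWith α D σ

/-- The value of a play: the highest priority occurring infinitely often. -/
noncomputable def playValue (π : ℕ → V) : ℕ := G.maxPr (infOcc π)

/-- `D` is a `p`-dominion with winning strategy `σ`: a dominion such that `p` is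
the maximum, over all consistent plays from `D`, of the highest priority seen
infinitely often. -/
def IsPDominionWith (α : Bool) (p : ℕ) (D : Set V) (σ : V → Option V) : Prop :=
  G.IsDominionWith α D σ ∧ IsGreatest (G.playValue '' G.PlaysFrom D σ) p

/-- `D` is a `p`-dominion for player `α`. -/
def IsPDominion (α : Bool) (p : ℕ) (D : Set V) : Prop := ∃ σ, G.IsPDominionWith α p D σ

/-- The edges of the subgame `G[U,σ]` induced by `U` and the strategy `σ`. -/
def subEdge (U : Set V) (σ : V → Option V) (u v : V) : Prop :=
  u ∈ U ∧ v ∈ U ∧ G.edge u v ∧ (σ u = none ∨ σ u = some v)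

/-- `G[U,σ]` is strongly connected. -/
def StronglyConnected (U : Set V) (σ : V → Option V) : Prop :=
  ∀ u ∈ U, ∀ v ∈ U, Relation.ReflTransGen (G.subEdge U σ) u v

/-- A cycle of `G[U,σ]`: from `v` through the list `l` back to `v`. -/
def IsCycle (U : Set V) (σ : V → Option V) (v : V) (l : List V) : Prop :=
  List.Chain (G.subEdge U σ) v (l ++ [v])

/-- Player `α` wins all cycles of `G[U,σ]`: the maximum priority on every cycle
has `α`'s parity. -/
def WinsAllCycles (α : Bool) (U : Set V) (σ : V → Option V) : Prop :=
  ∀ v l, G.IsCycle U σ v l → playerOf (G.maxPr {x | x ∈ v :: l}) = α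

/-- `(U, σ)` is a tangle: `U` is nonempty, `σ` is a strategy for the player `α`
of the parity of the highest priority of `U`, defined exactly on the
`α`-vertices of `U` with values in `U`, the subgame `G[U,σ]` is strongly
connected, and player `α` wins all cycles of `G[U,σ]`. -/
def IsTangle (U : Set V) (σ : V → Option V) : Prop :=
  U.Nonempty ∧
  (∀ v w, σ v = some w → v ∈ U ∧ w ∈ U ∧ G.owner v = playerOf (G.maxPr U) ∧ G.edge v w) ∧
  (∀ v ∈ U, G.owner v = playerOf (G.maxPr U) → (σ v).isSome) ∧
  G.StronglyConnected U σ ∧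
  G.WinsAllCycles (playerOf (G.maxPr U)) U σ

/-- The escapes `E_T(T)` of a tangle with vertex set `U`: the successors outside
`U` of the opponent's vertices in `U`. -/
def escapes (U : Set V) : Set V :=
  {v | v ∉ U ∧ ∃ u ∈ U, G.owner u ≠ playerOf (G.maxPr U) ∧ G.edge u v}

/-- The restriction of a strategy to a set `U`. -/
noncomputable def restrict (σ : V → Option V) (U : Set V) : V → Option V :=
  fun v => if v ∈ U then σ v else none

/-- The attractor of `A` for player `α`: the least fixpoint of
`Z := A ∪ {v ∈ V_α | E(v) ∩ Z ≠ ∅} ∪ {v ∈ V_ᾱ | E(v) ⊆ Z}`. -/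
inductive Attr (α : Bool) (A : Set V) : V → Prop
  | base : ∀ v, v ∈ A → Attr α A v
  | step : ∀ v w, G.owner v = α → G.edge v w → Attr α A w → Attr α A v
  | forced : ∀ v, G.owner v ≠ α → (∀ w, G.edge v w → Attr α A w) → Attr α A v

/-- The attractor of `A` for player `α`, as a set. -/
def attrSet (α : Bool) (A : Set V) : Set V := {v | G.Attr α A v}

/-- The tangle attractor of `A` for player `α` with tangle set `TT`: the least
fixpoint additionally attracting all vertices of `α`-tangles of `TT` whose
escapes all lie in the attracting set. -/
inductive TAttr (α : Bool) (TT : Set (Set V × (V → Option V))) (A : Set V) : V → Prop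
  | base : ∀ v, v ∈ A → TAttr α TT A v
  | step : ∀ v w, G.owner v = α → G.edge v w → TAttr α TT A w → TAttr α TT A v
  | forced : ∀ v, G.owner v ≠ α → (∀ w, G.edge v w → TAttr α TT A w) → TAttr α TT A v
  | tangle : ∀ (U : Set V) (τ : V → Option V) (v : V), (U, τ) ∈ TT →
      G.IsTangle U τ → playerOf (G.maxPr U) = α →
      (∀ w ∈ G.escapes U, TAttr α TT A w) → v ∈ U → TAttr α TT A v

/-- The tangle attractor of `A` for player `α`, as a set. -/
def tattrSet (α : Bool) (TT : Set (Set V × (V → Option V))) (A : Set V) : Set V :=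
  {v | G.TAttr α TT A v}

end ParityGame

/-!
Fix a winning strategy `σ` of the dominion and a consistent play `π` of value `p`. The set `U` of
vertices visited infinitely often by `π`, with `σ` restricted to `U`, is a `p`-tangle: the tail of
`π` stays in `U` and links any two of its vertices, so `G[U, σ]` is strongly connected, and every
cycle of `G[U, σ]`, repeated forever, is a play from `D` consistent with `σ`, hence won by the
dominion's owner.
-/

theorem List.IsChain.rel_getElem_mod {α : Type*} {R : α → α → Prop} {M : List α}
    (hM : 0 < M.length) (h : List.IsChain R (M ++ [M[0]])) (k : ℕ) :
    R (M[k % M.length]'(Nat.mod_lt _ hM)) (M[(k + 1) % M.length]'(Nat.mod_lt _ hM)) := by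
  have hk : k % M.length < M.length := Nat.mod_lt _ hM
  have hstep := h.getElem (k % M.length) (by simp; omega)
  rcases Nat.lt_or_ge (k % M.length + 1) M.length with hlt | hge
  · have hsucc : (k + 1) % M.length = k % M.length + 1 := by
      rw [← Nat.mod_add_mod, Nat.mod_eq_of_lt hlt]
    rw [List.getElem_append_left hk, List.getElem_append_left hlt] at hstep
    simpa only [hsucc] using hstep
  · have hsucc : (k + 1) % M.length = 0 := by
      rw [← Nat.mod_add_mod, show k % M.length + 1 = M.length by omega, Nat.mod_self]
    rw [List.getElem_append_left hk, List.getElem_append_right (by omega)] at hstep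
    simpa [hsucc] using hstep

namespace ParityGame

open Filter

variable {V : Type}

theorem infOcc_subset_range (π : ℕ → V) : infOcc π ⊆ Set.range π :=
  fun _ hv ↦ let ⟨m, _, hm⟩ := hv 0; ⟨m, hm⟩

theorem mem_infOcc_iff_frequently {π : ℕ → V} {v : V} :
    v ∈ infOcc π ↔ ∃ᶠ n in atTop, π n = v :=
  frequently_atTop.symm

theorem eventually_mem_infOcc [Finite V] (π : ℕ → V) : ∀ᶠ n in atTop, π n ∈ infOcc π := by
  have h : ∀ v, ∀ᶠ n in atTop, π n = v → v ∈ infOcc π := fun v ↦ by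
    by_cases hv : v ∈ infOcc π
    · exact Eventually.of_forall fun _ _ ↦ hv
    · rw [mem_infOcc_iff_frequently, not_frequently] at hv
      exact hv.mono fun _ hn h ↦ absurd h hn
  exact (eventually_all.2 h).mono fun n hn ↦ hn (π n) rfl

theorem infOcc_nonempty [Finite V] (π : ℕ → V) : (infOcc π).Nonempty :=
  let ⟨_, hn⟩ := (eventually_mem_infOcc π).exists
  ⟨_, hn⟩

theorem infOcc_eq_range_of_periodic {π : ℕ → V} {c : ℕ} (hπ : Function.Periodic π c)
    (hc : 0 < c) : infOcc π = Set.range π := by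
  refine (infOcc_subset_range π).antisymm ?_
  rintro _ ⟨j, rfl⟩ n
  exact ⟨j + n * c, by nlinarith, hπ.nat_mul n j⟩

variable {σ : V → Option V} {π : ℕ → V} {U D : Set V} {α : Bool}

theorem Consistent.eq_none_or (hc : Consistent σ π) (i : ℕ) :
    σ (π i) = none ∨ σ (π i) = some (π (i + 1)) := by
  cases hσ : σ (π i) with
  | none => exact .inl rfl
  | some w => exact .inr (congrArg some (hc i w hσ).symm)

theorem Consistent.mem_infOcc (hc : Consistent σ π) {v w : V} (hv : v ∈ infOcc π)
    (hw : σ v = some w) : w ∈ infOcc π := fun n ↦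
  let ⟨m, hm, hmv⟩ := hv n
  ⟨m + 1, by omega, hc m w (hmv ▸ hw)⟩

theorem restrict_eq_some_iff {v w : V} :
    restrict σ U v = some w ↔ v ∈ U ∧ σ v = some w := by
  unfold restrict
  split_ifs with hv <;> simp [hv]

variable [Fintype V] {G : ParityGame V}

theorem subEdge_restrict : G.subEdge U (restrict σ U) = G.subEdge U σ := by
  ext u v
  simp only [subEdge, restrict]
  constructor <;> rintro ⟨hu, hv, he, hσ⟩ <;> simp_all

theorem playsFrom_mono (hUD : U ⊆ D) : G.PlaysFrom U σ ⊆ G.PlaysFrom D σ :=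
  fun _ ⟨hplay, h0, hc⟩ ↦ ⟨hplay, hUD h0, hc⟩

theorem subEdge_of_isPlay (hπ : G.IsPlay π) (hc : Consistent σ π) {n : ℕ} (hn : π n ∈ U)
    (hn' : π (n + 1) ∈ U) :
    G.subEdge U σ (π n) (π (n + 1)) :=
  ⟨hn, hn', hπ n, hc.eq_none_or n⟩

theorem stronglyConnected_infOcc (hπ : G.IsPlay π) (hc : Consistent σ π) :
    G.StronglyConnected (infOcc π) σ := by
  obtain ⟨N, hN⟩ := eventually_atTop.1 (eventually_mem_infOcc π)
  have hreach :
      ∀ i ≥ N, ∀ m ≥ i, Relation.ReflTransGen (G.subEdge (infOcc π) σ) (π i) (π m) := by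
    intro i hi m hm
    induction m, hm using Nat.le_induction with
    | base => exact .refl
    | succ m hm ih => exact ih.tail (subEdge_of_isPlay hπ hc (hN m (by omega)) (hN _ (by omega)))
  intro u hu v hv
  obtain ⟨i, hi, rfl⟩ := hu N
  obtain ⟨m, hm, rfl⟩ := hv i
  exact hreach i hi m hm

theorem IsCycle.exists_playsFrom {v : V} {l : List V} (hcyc : G.IsCycle U σ v l) :
    ∃ π ∈ G.PlaysFrom U σ, infOcc π = {x | x ∈ v :: l} := by
  have hM : 0 < (v :: l).length := Nat.succ_pos _
  let π : ℕ → V := fun k ↦ (v :: l)[k % (v :: l).length]'(Nat.mod_lt _ hM)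
  have hstep : ∀ k, G.subEdge U σ (π k) (π (k + 1)) := List.IsChain.rel_getElem_mod hM hcyc
  have hperiodic : Function.Periodic π (v :: l).length := fun k ↦ by simp [π]
  refine ⟨π, ⟨fun k ↦ (hstep k).2.2.1, (hstep 0).1, fun k w hw ↦ ?_⟩, ?_⟩
  · rcases (hstep k).2.2.2 with hσ | hσ <;> rw [hσ] at hw
    · cases hw
    · exact Option.some_injective _ hw
  · rw [infOcc_eq_range_of_periodic hperiodic hM]
    ext x
    change (∃ k, π k = x) ↔ x ∈ v :: l
    rw [List.mem_iff_getElem]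
    exact ⟨fun ⟨k, hk⟩ ↦ ⟨_, _, hk⟩,
      fun ⟨j, hj, hjx⟩ ↦ ⟨j, by simpa only [π, Nat.mod_eq_of_lt hj]⟩⟩

theorem winsAllCycles_of_forall_wins (h : ∀ π ∈ G.PlaysFrom U σ, G.Wins α π) :
    G.WinsAllCycles α U σ := fun _ _ hcyc ↦ by
  obtain ⟨π, hπ, hinf⟩ := hcyc.exists_playsFrom
  rw [← hinf]
  exact h π hπ

theorem IsDominionWith.mem_of_mem_playsFrom (hD : G.IsDominionWith α D σ)
    (hπ : π ∈ G.PlaysFrom D σ) (i : ℕ) : π i ∈ D := by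
  obtain ⟨⟨-, hclosed⟩, -, hdef, -⟩ := hD
  obtain ⟨hplay, h0, hc⟩ := hπ
  induction i with
  | zero => exact h0
  | succ i ih =>
    by_cases ho : G.owner (π i) = α
    · obtain ⟨w, hwD, hw⟩ := hdef _ ih ho
      exact hc i w hw ▸ hwD
    · exact hclosed _ ih ho _ (hplay i)

theorem IsDominionWith.infOcc_subset (hD : G.IsDominionWith α D σ) (hπ : π ∈ G.PlaysFrom D σ) :
    infOcc π ⊆ D :=
  (infOcc_subset_range π).trans (Set.range_subset_iff.2 (hD.mem_of_mem_playsFrom hπ))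

theorem IsDominionWith.isTangle_infOcc (hD : G.IsDominionWith α D σ)
    (hπ : π ∈ G.PlaysFrom D σ) :
    G.IsTangle (infOcc π) (restrict σ (infOcc π)) := by
  have hUD := hD.infOcc_subset hπ
  obtain ⟨-, hstrat, hdef, hwin⟩ := hD
  have hα : playerOf (G.maxPr (infOcc π)) = α := hwin π hπ
  obtain ⟨hplay, -, hc⟩ := hπ
  refine ⟨infOcc_nonempty π, fun v w hvw ↦ ?_, fun v hv ho ↦ ?_, ?_, ?_⟩
  · obtain ⟨hv, hσ⟩ := restrict_eq_some_iff.1 hvw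
    exact ⟨hv, hc.mem_infOcc hv hσ, hα ▸ (hstrat v w hσ).1, (hstrat v w hσ).2⟩
  · obtain ⟨w, -, hw⟩ := hdef v (hUD hv) (hα ▸ ho)
    simp [restrict, hv, hw]
  · rw [StronglyConnected, subEdge_restrict]
    exact stronglyConnected_infOcc hplay hc
  · rw [WinsAllCycles, hα]
    simp only [IsCycle, subEdge_restrict]
    exact winsAllCycles_of_forall_wins fun π' hπ' ↦ hwin π' (playsFrom_mono hUD hπ')

end ParityGame

namespace ParityGame

variable {V : Type} [Fintype V]

/-- every `p`-dominion contains a `p`-tangle. -/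
theorem pdominion_contains_ptangle (G : ParityGame V) (p : ℕ) (D : Set V)
    (h : G.IsPDominion (playerOf p) p D) :
    ∃ (U : Set V) (σ' : V → Option V), U ⊆ D ∧ G.IsTangle U σ' ∧ G.maxPr U = p := by
  obtain ⟨σ, hD, ⟨π, hπ, hvalue⟩, -⟩ := h
  exact ⟨infOcc π, restrict σ (infOcc π), hD.infOcc_subset hπ, hD.isTangle_infOcc hπ, hvalue⟩

end ParityGame
end

section
/- Let G be a parity game whose highest priority is p, let α be the player of p's parity, and let A = Attr_α(pr⁻¹(p)), where pr⁻¹(p) is the set of vertices of priority p. Then there exists a strategy σ for player α, defined with values in A on the α-vertices of A that have a successor in A, such that every play consistent with σ that starts in A and remains in A forever visits a vertex of priority p infinitely often and is therefore won by player α (all plays that stay in the region are won by the region's player). -/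
open scoped Classical

namespace ParityGame

variable {V : Type} [Fintype V]

/-- Finite approximations of the attractor. -/
def attrN (G : ParityGame V) (α : Bool) (A : Set V) : ℕ → Set V
  | 0 => A
  | n+1 => attrN G α A n ∪
      {v | (G.owner v = α ∧ ∃ w ∈ attrN G α A n, G.edge v w) ∨
           (G.owner v ≠ α ∧ ∀ w, G.edge v w → w ∈ attrN G α A n)}

lemma attrN_mono (G : ParityGame V) (α : Bool) (A : Set V) {m n : ℕ} (h : m ≤ n) :
    attrN G α A m ⊆ attrN G α A n := by
  induction h with
  | refl => exact le_refl _
  | step _ ih => exact fun v hv => Or.inl (ih hv)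

lemma attrN_subset_attr (G : ParityGame V) (α : Bool) (A : Set V) :
    ∀ n, attrN G α A n ⊆ G.attrSet α A := by
  intro n
  induction n with
  | zero => exact fun v hv => Attr.base v hv
  | succ n ih =>
    rintro v (hv | ⟨hown, w, hw, he⟩ | ⟨hown, hall⟩)
    · exact ih hv
    · exact Attr.step v w hown he (ih hw)
    · exact Attr.forced v hown fun w hw => ih (hall w hw)

lemma attr_exists (G : ParityGame V) {α : Bool} {A : Set V} {v : V}
    (h : G.Attr α A v) : ∃ n, v ∈ attrN G α A n := by
  induction h with
  | base v hv => exact ⟨0, hv⟩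
  | step v w hown he _ ih => exact ⟨ih.choose + 1, Or.inr (Or.inl ⟨hown, w, ih.choose_spec, he⟩)⟩
  | forced v hown _ ih =>
    classical
    set f : V → ℕ := fun w => if h : ∃ n, w ∈ attrN G α A n then Nat.find h else 0 with hf
    refine ⟨(Finset.univ.sup f) + 1, Or.inr (Or.inr ⟨hown, fun w hw => ?_⟩)⟩
    have hex := ih w hw
    have h1 : w ∈ attrN G α A (f w) := by
      simp only [hf, dif_pos hex]
      exact Nat.find_spec hex
    exact attrN_mono G α A (Finset.le_sup (Finset.mem_univ w)) h1

/-- The rank of a vertex in the attractor. -/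
noncomputable def rank (G : ParityGame V) (α : Bool) (A : Set V) (v : V) : ℕ :=
  if h : ∃ n, v ∈ attrN G α A n then Nat.find h else 0

lemma mem_attrN_rank (G : ParityGame V) {α : Bool} {A : Set V} {v : V}
    (h : G.Attr α A v) : v ∈ attrN G α A (rank G α A v) := by
  have hex := G.attr_exists h
  simp only [rank, dif_pos hex]
  exact Nat.find_spec hex

lemma rank_le (G : ParityGame V) {α : Bool} {A : Set V} {v : V} {n : ℕ}
    (h : v ∈ attrN G α A n) : rank G α A v ≤ n := by
  have hex : ∃ n, v ∈ attrN G α A n := ⟨n, h⟩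
  simp only [rank, dif_pos hex]
  exact Nat.find_le h

lemma rank_pos (G : ParityGame V) {α : Bool} {A : Set V} {v : V}
    (h : G.Attr α A v) (hA : v ∉ A) : 0 < rank G α A v := by
  rcases Nat.eq_zero_or_pos (rank G α A v) with h0 | h0
  · have hm := G.mem_attrN_rank h
    rw [h0] at hm
    exact absurd hm hA
  · exact h0

lemma exists_succ (G : ParityGame V) {α : Bool} {A : Set V} {v : V}
    (hv : G.Attr α A v) (hA : v ∉ A) (hown : G.owner v = α) :
    ∃ w, G.edge v w ∧ w ∈ attrN G α A (rank G α A v - 1) := by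
  have hpos := G.rank_pos hv hA
  have hmem := G.mem_attrN_rank hv
  obtain ⟨k, hk⟩ : ∃ k, rank G α A v = k + 1 := ⟨rank G α A v - 1, (Nat.succ_pred_eq_of_pos hpos).symm⟩
  rw [hk] at hmem
  have hnot : v ∉ attrN G α A k := fun hc => by
    have := G.rank_le hc; omega
  rcases hmem with hmem | ⟨_, w, hw, he⟩ | ⟨hno, _⟩
  · exact absurd hmem hnot
  · exact ⟨w, he, by rw [hk]; simpa using hw⟩
  · exact absurd hown hno

/-- The attracting strategy. -/
noncomputable def topσ (G : ParityGame V) (α : Bool) (A : Set V) (v : V) : Option V :=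
  if h : G.owner v = α ∧ G.Attr α A v ∧ ∃ w, G.edge v w ∧ G.Attr α A w then
    if h0 : v ∈ A then some (Classical.choose h.2.2)
    else some (Classical.choose (G.exists_succ h.2.1 h0 h.1))
  else none

lemma topσ_isStrategy (G : ParityGame V) (α : Bool) (A : Set V) :
    G.IsStrategy α (topσ G α A) := by
  intro v w hvw
  simp only [topσ] at hvw
  split at hvw
  · rename_i h
    split at hvw
    · obtain ⟨h1, h2⟩ := Classical.choose_spec h.2.2
      injection hvw with h'
      exact ⟨h.1, h' ▸ h1⟩
    · rename_i h0
      obtain ⟨h1, h2⟩ := Classical.choose_spec (G.exists_succ h.2.1 h0 h.1)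
      injection hvw with h'
      exact ⟨h.1, h' ▸ h1⟩
  · exact absurd hvw (by simp)

lemma topσ_mem (G : ParityGame V) {α : Bool} {A : Set V} {v w : V}
    (hvw : topσ G α A v = some w) : G.Attr α A w := by
  simp only [topσ] at hvw
  split at hvw
  · rename_i h
    split at hvw
    · obtain ⟨h1, h2⟩ := Classical.choose_spec h.2.2
      injection hvw with h'; exact h' ▸ h2
    · rename_i h0
      obtain ⟨h1, h2⟩ := Classical.choose_spec (G.exists_succ h.2.1 h0 h.1)
      injection hvw with h'
      exact h' ▸ G.attrN_subset_attr α A _ h2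
  · exact absurd hvw (by simp)

lemma topσ_defined (G : ParityGame V) {α : Bool} {A : Set V} {v : V}
    (hv : G.Attr α A v) (hown : G.owner v = α) (hsucc : ∃ w, G.edge v w ∧ G.Attr α A w) :
    ∃ w, G.Attr α A w ∧ topσ G α A v = some w := by
  have h : G.owner v = α ∧ G.Attr α A v ∧ ∃ w, G.edge v w ∧ G.Attr α A w := ⟨hown, hv, hsucc⟩
  simp only [topσ, dif_pos h]
  split
  · obtain ⟨h1, h2⟩ := Classical.choose_spec h.2.2
    exact ⟨_, h2, rfl⟩
  · rename_i h0
    obtain ⟨h1, h2⟩ := Classical.choose_spec (G.exists_succ h.2.1 h0 h.1)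
    exact ⟨_, G.attrN_subset_attr α A _ h2, rfl⟩

/-- Key descent lemma: following the strategy from a non-`A` vertex of the
attractor strictly decreases the rank. -/
lemma topσ_descent (G : ParityGame V) {α : Bool} {A : Set V} {v w : V}
    (hv : G.Attr α A v) (hA : v ∉ A) (hvw : G.edge v w)
    (hc : ∀ w', topσ G α A v = some w' → w = w') :
    w ∈ attrN G α A (rank G α A v - 1) := by
  by_cases hown : G.owner v = α
  · have hex := G.exists_succ hv hA hown
    have h : G.owner v = α ∧ G.Attr α A v ∧ ∃ w, G.edge v w ∧ G.Attr α A w :=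
      ⟨hown, hv, hex.imp fun w' hw' => ⟨hw'.1, G.attrN_subset_attr α A _ hw'.2⟩⟩
    have heq : topσ G α A v = some (Classical.choose (G.exists_succ h.2.1 hA h.1)) := by
      simp only [topσ, dif_pos h, dif_neg hA]
    have := hc _ heq
    rw [this]
    exact (Classical.choose_spec (G.exists_succ h.2.1 hA h.1)).2
  · have hpos := G.rank_pos hv hA
    have hmem := G.mem_attrN_rank hv
    obtain ⟨k, hk⟩ : ∃ k, rank G α A v = k + 1 :=
      ⟨rank G α A v - 1, (Nat.succ_pred_eq_of_pos hpos).symm⟩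
    rw [hk] at hmem
    have hnot : v ∉ attrN G α A k := fun hc' => by
      have := G.rank_le hc'; omega
    rcases hmem with hmem | ⟨hyes, _⟩ | ⟨_, hall⟩
    · exact absurd hmem hnot
    · exact absurd hyes hown
    · rw [hk]; simpa using hall w hvw

/-- Every play consistent with the strategy from a vertex of the attractor
eventually reaches `A`. -/
lemma topσ_reach (G : ParityGame V) {α : Bool} {A : Set V} {π : ℕ → V}
    (hplay : G.IsPlay π) (hcons : Consistent (topσ G α A) π) :
    ∀ n i, G.Attr α A (π i) → rank G α A (π i) ≤ n → ∃ m, i ≤ m ∧ π m ∈ A := by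
  intro n
  induction n with
  | zero =>
    intro i hi hr
    refine ⟨i, le_refl i, ?_⟩
    have := G.mem_attrN_rank hi
    rwa [Nat.le_zero.mp hr] at this
  | succ n ih =>
    intro i hi hr
    by_cases hA : π i ∈ A
    · exact ⟨i, le_refl i, hA⟩
    · have hstep : π (i+1) ∈ attrN G α A (rank G α A (π i) - 1) :=
        G.topσ_descent hi hA (hplay i) (fun w' h' => hcons i w' h')
      have hpos := G.rank_pos hi hA
      have h1 : G.Attr α A (π (i+1)) := G.attrN_subset_attr α A _ hstep
      have h2 : rank G α A (π (i+1)) ≤ n := le_trans (G.rank_le hstep) (by omega)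
      obtain ⟨m, hm, hmA⟩ := ih (i+1) h1 h2
      exact ⟨m, by omega, hmA⟩

/-- in the attractor `A` to the vertices of the highest priority
`p`, the player `α` of `p`'s parity has a strategy such that all plays that
stay in `A` forever visit priority `p` infinitely often and are won by `α`. -/
theorem top_region_winning (G : ParityGame V) (p : ℕ)
    (hp : IsGreatest (G.pr '' Set.univ) p) (α : Bool) (hα : α = playerOf p) :
    ∃ σ : V → Option V, G.IsStrategy α σ ∧
      (∀ v ∈ G.attrSet α {u | G.pr u = p}, G.owner v = α →
        (∃ w ∈ G.attrSet α {u | G.pr u = p}, G.edge v w) →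
        ∃ w ∈ G.attrSet α {u | G.pr u = p}, σ v = some w) ∧
      ∀ π : ℕ → V, G.IsPlay π → Consistent σ π →
        π 0 ∈ G.attrSet α {u | G.pr u = p} →
        (∀ i, π i ∈ G.attrSet α {u | G.pr u = p}) →
        (∀ n : ℕ, ∃ m, n ≤ m ∧ G.pr (π m) = p) ∧ G.Wins α π := by
  classical
  set A : Set V := {u | G.pr u = p} with hA
  refine ⟨topσ G α A, G.topσ_isStrategy α A, ?_, ?_⟩
  · intro v hv hown ⟨w, hw, he⟩
    obtain ⟨w', hw', heq⟩ := G.topσ_defined hv hown ⟨w, he, hw⟩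
    exact ⟨w', hw', heq⟩
  · intro π hplay hcons h0 hall
    have hvisit : ∀ n : ℕ, ∃ m, n ≤ m ∧ G.pr (π m) = p := by
      intro n
      obtain ⟨m, hm, hmA⟩ := G.topσ_reach hplay hcons (rank G α A (π n)) n (hall n) le_rfl
      exact ⟨m, hm, hmA⟩
    refine ⟨hvisit, ?_⟩
    -- the set of times hitting priority p is infinite
    have hK : {m | G.pr (π m) = p}.Infinite := by
      apply Set.infinite_of_not_bddAbove
      rintro ⟨b, hb⟩
      obtain ⟨m, hm, hpm⟩ := hvisit (b + 1)
      have := hb hpm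
      omega
    haveI : Infinite {m // G.pr (π m) = p} := hK.to_subtype
    obtain ⟨v, hv⟩ := Finite.exists_infinite_fiber (fun m : {m // G.pr (π m) = p} => π m.1)
    have hfib : Set.Infinite {m : ℕ | π m = v ∧ G.pr (π m) = p} := by
      haveI := hv
      apply Set.infinite_of_injective_forall_mem
        (f := fun x : ((fun m : {m // G.pr (π m) = p} => π m.1) ⁻¹' {v}) => x.1.1)
      · intro x y hxy
        exact Subtype.ext (Subtype.ext hxy)
      · intro x
        exact ⟨x.2, x.1.2⟩
    have hvinf : v ∈ infOcc π := by
      intro n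
      obtain ⟨m, hm, hlt⟩ := hfib.exists_gt n
      exact ⟨m, le_of_lt hlt, hm.1⟩
    have hvp : G.pr v = p := by
      obtain ⟨m, hm1, hm2⟩ := hfib.nonempty
      exact hm1 ▸ hm2
    have hgr : IsGreatest (G.pr '' infOcc π) p := by
      constructor
      · exact ⟨v, hvinf, hvp⟩
      · rintro q ⟨u, _, rfl⟩
        exact hp.2 ⟨u, Set.mem_univ u, rfl⟩
    have hmax : G.maxPr (infOcc π) = p := hgr.csSup_eq
    show playerOf (G.maxPr (infOcc π)) = α
    rw [hmax, hα]

end ParityGame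
end
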